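/- arXiv:2506.24060 — 2 statements merged into one kernel-verified Lean document; each statement's English description precedes it below -/
import Mathlib

section
/- Let Λ, r, t_a, t_p be positive integers with t_a + r ≤ Λ and t_p ≤ C(Λ−t_a, r) − 1. Then the total number of pairs (U, {T_1,...,T_{t_p}}) where U is an r-subset of [Λ]\S for a fixed t_a-subset S, and {T_1,...,T_{t_p}} is a t_p-element family of r-subsets of [Λ]\S all distinct from U, equals C(Λ−t_a, r) · C( C(Λ−t_a, r) − 1, t_p ), and this number equals ∑_{i=0}^{r−1} C(Λ−t_a, i) · (t_p+1) · ∑_{j=0}^{r−i−1} (−1)^j C(Λ−t_a−i, j) C( C(Λ−t_a−i−j, r−i−j), t_p+1 ) where the i-th summand counts pairs whose total intersection U ∩ T_1 ∩ ... ∩ T_{t_p} has cardinality exactly i. -/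
/-!
Sending a pair `(U, B)` to the family `insert U B` is `(t_p + 1)`-to-one onto the
`(t_p + 1)`-families of `r`-sets, and it keeps the common intersection. The families whose common
intersection is exactly `I` are counted by Möbius inversion on the subsets of the ground set:
exactly `C(C(n - |I| - |K|, r - |I| - |K|), t_p + 1)` families have all members containing `I ∪ K`.
The terms with `|K| ≥ r - |I|` vanish, since at most one `r`-set contains `I ∪ K` and
`t_p + 1 ≥ 2`. Finally, `U` and any member of `B` are distinct `r`-sets, so the common
intersection of a pair has fewer than `r` elements.
-/

open Finset

theorem sum_range_eq_sum_range_of_eq_zero {M : Type*} [AddCommMonoid M] {f : ℕ → M} {m n : ℕ}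
    (hmn : m ≤ n) (hf : ∀ j, m ≤ j → f j = 0) :
    ∑ j ∈ range n, f j = ∑ j ∈ range m, f j := by
  rw [← sum_range_add_sum_Ico f hmn, sum_eq_zero fun j hj => hf j (mem_Ico.1 hj).1, add_zero]

section DoubleCounting

variable {β : Type*} [DecidableEq β]

theorem card_filter_notMem_product_powersetCard (P : Finset β) (t : ℕ) :
    #{p ∈ P ×ˢ P.powersetCard t | p.1 ∉ p.2} = #P * (#P - 1).choose t := by
  rw [card_filter, sum_product]
  refine sum_const_nat fun U hU => ?_
  rw [← card_filter, ← card_erase_of_mem hU, ← card_powersetCard]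
  congr 1
  ext B
  simp only [mem_filter, mem_powersetCard, subset_erase]
  tauto

theorem card_filter_notMem_insert (P : Finset β) (t : ℕ) (q : Finset β → Prop)
    [DecidablePred q] :
    #{p ∈ P ×ˢ P.powersetCard t | p.1 ∉ p.2 ∧ q (insert p.1 p.2)}
      = (t + 1) * #{F ∈ P.powersetCard (t + 1) | q F} := by
  have hbij : #{p ∈ P ×ˢ P.powersetCard t | p.1 ∉ p.2 ∧ q (insert p.1 p.2)}
      = #({F ∈ P.powersetCard (t + 1) | q F}.sigma id) := by
    refine card_nbij' (fun p => ⟨insert p.1 p.2, p.1⟩) (fun x => (x.2, x.1.erase x.2))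
      ?_ ?_ ?_ ?_
    · rintro ⟨U, B⟩ h
      simp only [coe_filter, mem_product, mem_powersetCard, Set.mem_ofPred_eq] at h
      obtain ⟨⟨hU, hBP, hB⟩, hUB, hq⟩ := h
      simp only [coe_sigma, Set.mem_sigma_iff, coe_filter, mem_powersetCard, Set.mem_ofPred_eq,
        id, mem_coe, mem_insert_self, and_true]
      exact ⟨⟨insert_subset hU hBP, by rw [card_insert_of_notMem hUB, hB]⟩, hq⟩
    · rintro ⟨F, U⟩ h
      simp only [coe_sigma, Set.mem_sigma_iff, coe_filter, mem_powersetCard, Set.mem_ofPred_eq,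
        id, mem_coe] at h
      obtain ⟨⟨⟨hFP, hF⟩, hq⟩, hU⟩ := h
      simp only [coe_filter, mem_product, mem_powersetCard, Set.mem_ofPred_eq, notMem_erase,
        not_false_eq_true, true_and, insert_erase hU]
      exact ⟨⟨hFP hU, (erase_subset U F).trans hFP, by rw [card_erase_of_mem hU, hF]; rfl⟩, hq⟩
    · rintro ⟨U, B⟩ h
      simp only [coe_filter, Set.mem_ofPred_eq] at h
      simp [erase_insert h.2.1]
    · rintro ⟨F, U⟩ h
      simp only [coe_sigma, Set.mem_sigma_iff, mem_coe, id] at h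
      simp [insert_erase h.2]
  rw [hbij, card_sigma, mul_comm]
  exact sum_const_nat fun F hF => (mem_powersetCard.1 (mem_filter.1 hF).1).2

end DoubleCounting

section CommonInter

variable {α β : Type*} [DecidableEq α]

def commonInter (s : Finset α) (F : Finset (Finset α)) : Finset α := {x ∈ s | ∀ A ∈ F, x ∈ A}

theorem commonInter_subset (s : Finset α) (F : Finset (Finset α)) : commonInter s F ⊆ s :=
  filter_subset _ _

theorem commonInter_insert (s U : Finset α) (B : Finset (Finset α)) :
    commonInter s (insert U B) = {x ∈ s | x ∈ U ∧ ∀ A ∈ B, x ∈ A} := by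
  simp [commonInter]

theorem subset_commonInter_iff {s J : Finset α} (hJ : J ⊆ s) (F : Finset (Finset α)) :
    J ⊆ commonInter s F ↔ ∀ A ∈ F, J ⊆ A := by
  simp only [commonInter, subset_iff, mem_filter]
  exact ⟨fun h A hA x hx => (h hx).2 A hA, fun h x hx => ⟨hJ hx, fun A hA => h A hA hx⟩⟩

theorem card_commonInter_lt {s U A : Finset α} {F : Finset (Finset α)} {r : ℕ}
    (hU : U ∈ F) (hA : A ∈ F) (hUA : U ≠ A) (hUr : #U = r) (hAr : #A = r) :
    #(commonInter s F) < r := by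
  have hsub : commonInter s F ⊆ U ∩ A := fun x hx =>
    mem_inter.2 ⟨(mem_filter.1 hx).2 U hU, (mem_filter.1 hx).2 A hA⟩
  have hUA' : ¬U ⊆ A := fun h => hUA (eq_of_subset_of_card_le h (by omega))
  exact hUr ▸ (card_le_card hsub).trans_lt (card_lt_card (inf_lt_left.2 hUA'))

theorem filter_powersetCard_forall (P : Finset β) (p : β → Prop) [DecidablePred p] (k : ℕ) :
    {F ∈ P.powersetCard k | ∀ A ∈ F, p A} = {A ∈ P | p A}.powersetCard k := by
  ext F
  simp only [mem_filter, mem_powersetCard, subset_iff]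
  grind

theorem card_filter_subset_commonInter {s J : Finset α} (hJ : J ⊆ s) {k : ℕ} (hk : 1 < k)
    (r : ℕ) :
    #{F ∈ (s.powersetCard r).powersetCard k | J ⊆ commonInter s F}
      = ((#s - #J).choose (r - #J)).choose k := by
  simp only [subset_commonInter_iff hJ, filter_powersetCard_forall, card_powersetCard]
  rcases le_or_gt #J r with hJr | hJr
  · rw [card_filter_powersetCard_subset J s r hJ hJr]
  · have hempty : {A ∈ s.powersetCard r | J ⊆ A} = ∅ :=
      filter_eq_empty_iff.2 fun A hA hJA => by
        have := card_le_card hJA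
        rw [(mem_powersetCard.1 hA).2] at this
        omega
    rw [hempty, Nat.sub_eq_zero_of_le hJr.le, Nat.choose_zero_right, card_empty,
      Nat.choose_eq_zero_of_lt (by omega), Nat.choose_eq_zero_of_lt hk]

theorem sum_neg_one_pow_filter_union_subset {s I W : Finset α} (hW : W ⊆ s) :
    ∑ K ∈ (s \ I).powerset with I ∪ K ⊆ W, (-1 : ℤ) ^ #K = if W = I then 1 else 0 := by
  by_cases hIW : I ⊆ W
  · have hfilter : {K ∈ (s \ I).powerset | I ∪ K ⊆ W} = (W \ I).powerset := by
      ext K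
      simp only [mem_filter, mem_powerset, union_subset_iff, subset_sdiff]
      exact ⟨fun ⟨⟨_, hKI⟩, _, hKW⟩ => ⟨hKW, hKI⟩,
        fun ⟨hKW, hKI⟩ => ⟨⟨hKW.trans hW, hKI⟩, hIW, hKW⟩⟩
    rw [hfilter, sum_powerset_neg_one_pow_card]
    exact if_congr (sdiff_eq_empty_iff_subset.trans ⟨fun h => subset_antisymm h hIW, fun h => h.le⟩)
      rfl rfl
  · rw [if_neg fun h => hIW h.ge, sum_eq_zero]
    intro K hK
    exact absurd (subset_union_left.trans (mem_filter.1 hK).2) hIW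

theorem card_filter_eq_eq_sum_powerset {𝒜 : Finset β} {s : Finset α} {w : β → Finset α}
    (hw : ∀ F ∈ 𝒜, w F ⊆ s) (I : Finset α) :
    (#{F ∈ 𝒜 | w F = I} : ℤ)
      = ∑ K ∈ (s \ I).powerset, (-1) ^ #K * (#{F ∈ 𝒜 | I ∪ K ⊆ w F} : ℤ) := by
  simp only [natCast_card_filter, mul_sum, mul_boole]
  rw [sum_comm]
  refine sum_congr rfl fun F hF => ?_
  rw [← sum_filter, sum_neg_one_pow_filter_union_subset (hw F hF)]

theorem card_filter_commonInter_eq {s I : Finset α} (hI : I ⊆ s) {t : ℕ} (ht : 0 < t) (r : ℕ) :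
    (#{F ∈ (s.powersetCard r).powersetCard (t + 1) | commonInter s F = I} : ℤ)
      = ∑ j ∈ range (r - #I), (-1) ^ j * ((#s - #I).choose j : ℤ) *
          ((#s - #I - j).choose (r - #I - j)).choose (t + 1) := by
  have hterm : ∀ K ∈ (s \ I).powerset,
      (-1 : ℤ) ^ #K * #{F ∈ (s.powersetCard r).powersetCard (t + 1) | I ∪ K ⊆ commonInter s F}
        = (-1) ^ #K * ((#s - #I - #K).choose (r - #I - #K)).choose (t + 1) := by
    intro K hK
    have hKs := mem_powerset.1 hK
    rw [card_filter_subset_commonInter (union_subset hI (hKs.trans sdiff_subset)) (by omega),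
      card_union_of_disjoint (disjoint_of_subset_right hKs disjoint_sdiff), Nat.sub_add_eq,
      Nat.sub_add_eq]
  rw [card_filter_eq_eq_sum_powerset (fun F _ => commonInter_subset s F), sum_congr rfl hterm,
    sum_powerset_apply_card fun m =>
      (-1 : ℤ) ^ m * ((#s - #I - m).choose (r - #I - m)).choose (t + 1),
    card_sdiff_of_subset hI]
  trans ∑ j ∈ range (#s - #I + 1), (-1 : ℤ) ^ j * ((#s - #I).choose j : ℤ) *
      ((#s - #I - j).choose (r - #I - j)).choose (t + 1)
  · exact sum_congr rfl fun j _ => by rw [nsmul_eq_mul]; ring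
  have hvanish : ∀ j, min (r - #I) (#s - #I + 1) ≤ j →
      (-1 : ℤ) ^ j * ((#s - #I).choose j : ℤ) *
        ((#s - #I - j).choose (r - #I - j)).choose (t + 1) = 0 := by
    intro j hj
    rcases min_le_iff.1 hj with hj | hj
    · rw [Nat.sub_eq_zero_of_le hj, Nat.choose_zero_right,
        Nat.choose_eq_zero_of_lt (by omega : 1 < t + 1)]
      simp
    · rw [Nat.choose_eq_zero_of_lt (by omega : #s - #I < j)]
      simp
  rw [sum_range_eq_sum_range_of_eq_zero (min_le_right _ _) hvanish,
    sum_range_eq_sum_range_of_eq_zero (min_le_left _ _) hvanish]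

theorem card_filter_card_commonInter_eq (s : Finset α) {t : ℕ} (ht : 0 < t) (r i : ℕ) :
    (#{F ∈ (s.powersetCard r).powersetCard (t + 1) | #(commonInter s F) = i} : ℤ)
      = (#s).choose i * ∑ j ∈ range (r - i), (-1) ^ j * ((#s - i).choose j : ℤ) *
          ((#s - i - j).choose (r - i - j)).choose (t + 1) := by
  have hmaps : ∀ F ∈ {F ∈ (s.powersetCard r).powersetCard (t + 1) | #(commonInter s F) = i},
      commonInter s F ∈ s.powersetCard i := fun F hF =>
    mem_powersetCard.2 ⟨commonInter_subset s F, (mem_filter.1 hF).2⟩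
  rw [card_eq_sum_card_fiberwise hmaps, Nat.cast_sum, ← card_powersetCard, ← nsmul_eq_mul,
    ← sum_const]
  refine sum_congr rfl fun I hI => ?_
  obtain ⟨hIs, rfl⟩ := mem_powersetCard.1 hI
  rw [filter_filter, ← card_filter_commonInter_eq hIs ht r]
  congr 3
  ext F
  exact ⟨fun h => h.2, fun h => ⟨h ▸ rfl, h⟩⟩

end CommonInter

theorem stmt_8_general (Λ r t_a t_p : ℕ) (htp : 0 < t_p)
    (S : Finset ℕ) (hS : S ⊆ Finset.Icc 1 Λ) (hScard : S.card = t_a)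
    (ground : Finset ℕ) (hground : ground = Finset.Icc 1 Λ \ S)
    (pairs : Finset (Finset ℕ × Finset (Finset ℕ)))
    (hpairs : pairs = ((ground.powersetCard r) ×ˢ
      ((ground.powersetCard r).powersetCard t_p)).filter (fun p => p.1 ∉ p.2)) :
    pairs.card = (Λ - t_a).choose r * ((Λ - t_a).choose r - 1).choose t_p ∧
    (pairs.card : ℤ) = ∑ i ∈ Finset.range r, ((Λ - t_a).choose i : ℤ) * (t_p + 1) *
        ∑ j ∈ Finset.range (r - i), (-1 : ℤ) ^ j * ((Λ - t_a - i).choose j : ℤ) *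
          ((((Λ - t_a - i - j).choose (r - i - j)).choose (t_p + 1)) : ℤ) ∧
    ∀ i < r, (((pairs.filter (fun p =>
        (ground.filter (fun x => x ∈ p.1 ∧ ∀ A ∈ p.2, x ∈ A)).card = i)).card : ℤ) =
      ((Λ - t_a).choose i : ℤ) * (t_p + 1) *
        ∑ j ∈ Finset.range (r - i), (-1 : ℤ) ^ j * ((Λ - t_a - i).choose j : ℤ) *
          ((((Λ - t_a - i - j).choose (r - i - j)).choose (t_p + 1)) : ℤ)) := by
  have hground_card : #ground = Λ - t_a := by
    rw [hground, card_sdiff_of_subset hS, Nat.card_Icc, hScard, Nat.add_sub_cancel]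
  have hfiber : ∀ i, (#{p ∈ pairs | #(commonInter ground (insert p.1 p.2)) = i} : ℤ)
      = ((Λ - t_a).choose i : ℤ) * (t_p + 1) *
        ∑ j ∈ range (r - i), (-1 : ℤ) ^ j * ((Λ - t_a - i).choose j : ℤ) *
          ((Λ - t_a - i - j).choose (r - i - j)).choose (t_p + 1) := by
    intro i
    rw [hpairs, filter_filter, card_filter_notMem_insert _ _ fun F => #(commonInter ground F) = i,
      Nat.cast_mul, card_filter_card_commonInter_eq ground htp, hground_card]
    push_cast
    ring
  have hlt : ∀ p ∈ pairs, #(commonInter ground (insert p.1 p.2)) ∈ range r := by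
    rintro ⟨U, B⟩ hp
    simp only [hpairs, mem_filter, mem_product, mem_powersetCard] at hp
    obtain ⟨⟨⟨-, hU⟩, hBP, hB⟩, hUB⟩ := hp
    obtain ⟨A, hA⟩ := card_pos.1 (hB ▸ htp)
    exact mem_range.2 <| card_commonInter_lt (mem_insert_self U B) (mem_insert_of_mem hA)
      (fun h => hUB (h ▸ hA)) hU (mem_powersetCard.1 (hBP hA)).2
  simp only [← commonInter_insert]
  refine ⟨?_, ?_, fun i _ => hfiber i⟩
  · rw [hpairs, card_filter_notMem_product_powersetCard, card_powersetCard, hground_card]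
  · rw [card_eq_sum_card_fiberwise hlt, Nat.cast_sum]
    exact sum_congr rfl fun i _ => hfiber i

/-- Decomposition of the set of demanded mini-subfiles by intersection cardinality. -/
theorem stmt_8 (Λ r t_a t_p : ℕ) (hΛ : 0 < Λ) (hr : 0 < r) (hta : 0 < t_a)
    (htp : 0 < t_p) (hsum : t_a + r ≤ Λ) (htp' : t_p ≤ (Λ - t_a).choose r - 1)
    (S : Finset ℕ) (hS : S ⊆ Finset.Icc 1 Λ) (hScard : S.card = t_a)
    (ground : Finset ℕ) (hground : ground = Finset.Icc 1 Λ \ S)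
    (pairs : Finset (Finset ℕ × Finset (Finset ℕ)))
    (hpairs : pairs = ((ground.powersetCard r) ×ˢ
      ((ground.powersetCard r).powersetCard t_p)).filter (fun p => p.1 ∉ p.2)) :
    pairs.card = (Λ - t_a).choose r * ((Λ - t_a).choose r - 1).choose t_p ∧
    (pairs.card : ℤ) = ∑ i ∈ Finset.range r, ((Λ - t_a).choose i : ℤ) * (t_p + 1) *
        ∑ j ∈ Finset.range (r - i), (-1 : ℤ) ^ j * ((Λ - t_a - i).choose j : ℤ) *
          ((((Λ - t_a - i - j).choose (r - i - j)).choose (t_p + 1)) : ℤ) ∧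
    ∀ i < r, (((pairs.filter (fun p =>
        (ground.filter (fun x => x ∈ p.1 ∧ ∀ A ∈ p.2, x ∈ A)).card = i)).card : ℤ) =
      ((Λ - t_a).choose i : ℤ) * (t_p + 1) *
        ∑ j ∈ Finset.range (r - i), (-1 : ℤ) ^ j * ((Λ - t_a - i).choose j : ℤ) *
          ((((Λ - t_a - i - j).choose (r - i - j)).choose (t_p + 1)) : ℤ)) :=
  stmt_8_general Λ r t_a t_p htp S hS hScard ground hground pairs hpairs
end

section
/- Let Λ, r, t_a, t_p be positive integers with t_a + r ≤ Λ and Λ·t_p < (t_a + r)·t_p + r. Then the rate R = ∑_{i=1}^{r−1} [ C(Λ−t_a, i) · ∑_{j=0}^{r−i−1} (−1)^j C(Λ−t_a−i, j) C( C(Λ−t_a−i−j, r−i−j), t_p+1 ) ] / [ C( C(Λ−t_a, r), t_p ) · C(t_a+i, t_a) ] is nonnegative, and each inner alternating sum ∑_{j=0}^{r−i−1} (−1)^j C(Λ−t_a−i, j) C( C(Λ−t_a−i−j, r−i−j), t_p+1 ) is nonnegative. -/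
/-!
For `T`-families `F` of distinct `k`-subsets of an `n`-set, inclusion–exclusion over the
subsets `C ⊆ ⋂ F` shows that the alternating sum is the number of such families with empty
common intersection. A family whose members all contain a
`j`-set `C` is a `T`-subset of the `(n - j).choose (k - j)` sets `A ⊇ C`; for `j ≥ k` there
is at most one such set, and since `T ≥ 2` these terms vanish, which truncates the sum at `k`.
-/

open Finset

namespace Finset

lemma filter_forall_mem_powersetCard {β : Type*} (p : β → Prop) [DecidablePred p]
    [DecidablePred fun F : Finset β => ∀ A ∈ F, p A] (s : Finset β) (T : ℕ) :
    (s.powersetCard T).filter (fun F => ∀ A ∈ F, p A) = (s.filter p).powersetCard T := by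
  ext F
  simp only [mem_filter, mem_powersetCard, subset_iff]
  grind

variable {α ι : Type*} [Fintype α] [DecidableEq α]

theorem sum_neg_one_pow_card_mul_card_filter_subset (s : Finset ι) (g : ι → Finset α) :
    ∑ C : Finset α, (-1 : ℤ) ^ #C * #(s.filter (fun x => C ⊆ g x)) =
      #(s.filter (fun x => g x = ∅)) := by
  simp only [card_filter, Nat.cast_sum, Nat.cast_ite, Nat.cast_one, Nat.cast_zero, mul_sum]
  rw [sum_comm]
  refine sum_congr rfl fun x _ => ?_
  simp only [mul_ite, mul_one, mul_zero]
  rw [← sum_filter, filter_subset_univ, sum_powerset_neg_one_pow_card]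

theorem card_powersetCard_powersetCard_filter_subset_inf (C : Finset α) {k T : ℕ} (hT : 2 ≤ T) :
    #(((univ.powersetCard k).powersetCard T).filter (fun F => C ⊆ F.inf id)) =
      if #C < k then ((Fintype.card α - #C).choose (k - #C)).choose T else 0 := by
  have hinf (F : Finset (Finset α)) : C ⊆ F.inf id ↔ ∀ A ∈ F, C ⊆ A := Finset.le_inf_iff
  rw [filter_congr fun F _ => hinf F, filter_forall_mem_powersetCard, card_powersetCard]
  split_ifs with hC
  · rw [card_filter_powersetCard_subset _ _ _ (subset_univ C) hC.le, card_univ]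
  · have hsub : (univ.powersetCard k).filter (C ⊆ ·) ⊆ {C} := fun A hA => by
      simp only [mem_filter, mem_powersetCard_univ] at hA
      exact mem_singleton.2 (eq_of_subset_of_card_le hA.2 (by omega)).symm
    exact Nat.choose_eq_zero_of_lt ((card_le_card hsub).trans_lt (by rwa [card_singleton]))

end Finset

theorem alternating_sum_choose_choose_eq_card {n k T : ℕ} (hk : k ≤ n) (hT : 2 ≤ T) :
    ∑ j ∈ range k, (-1 : ℤ) ^ j * n.choose j * ((n - j).choose (k - j)).choose T =
      #(((univ : Finset (Fin n)).powersetCard k).powersetCard T |>.filter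
        (fun F => F.inf id = ∅)) := by
  rw [← sum_neg_one_pow_card_mul_card_filter_subset]
  simp only [card_powersetCard_powersetCard_filter_subset_inf _ hT]
  rw [← powerset_univ, Fintype.card_fin, sum_powerset_apply_card
    (fun m => (-1 : ℤ) ^ m * ((if m < k then ((n - m).choose (k - m)).choose T else 0 : ℕ) : ℤ)),
    card_univ, Fintype.card_fin]
  simp only [Nat.cast_ite, Nat.cast_zero, mul_ite, mul_zero, smul_ite, smul_zero]
  rw [← sum_filter]
  have hrange : (range (n + 1)).filter (· < k) = range k := by
    ext j; simp only [mem_filter, mem_range]; omega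
  rw [hrange]
  refine sum_congr rfl fun j _ => ?_
  rw [nsmul_eq_mul]
  ring

theorem alternating_sum_choose_choose_nonneg {n k T : ℕ} (hk : k ≤ n) (hT : 2 ≤ T) :
    0 ≤ ∑ j ∈ range k, (-1 : ℤ) ^ j * n.choose j * ((n - j).choose (k - j)).choose T := by
  rw [alternating_sum_choose_choose_eq_card hk hT]
  exact Int.natCast_nonneg _

theorem stmt_16_general (Λ r t_a t_p : ℕ)
    (htp : 0 < t_p) (hsum : t_a + r ≤ Λ) :
    (∀ i, 1 ≤ i → i ≤ r - 1 →
      (0 : ℤ) ≤ ∑ j ∈ Finset.range (r - i), (-1 : ℤ) ^ j * ((Λ - t_a - i).choose j : ℤ) *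
        ((((Λ - t_a - i - j).choose (r - i - j)).choose (t_p + 1)) : ℤ)) ∧
    (0 : ℚ) ≤ ∑ i ∈ Finset.Icc 1 (r - 1),
      (((Λ - t_a).choose i : ℚ) *
        (((∑ j ∈ Finset.range (r - i), (-1 : ℤ) ^ j * ((Λ - t_a - i).choose j : ℤ) *
          ((((Λ - t_a - i - j).choose (r - i - j)).choose (t_p + 1)) : ℤ)) : ℤ) : ℚ)) /
        ((((Λ - t_a).choose r).choose t_p : ℚ) * ((t_a + i).choose t_a : ℚ)) := by
  have inner_nonneg (i : ℕ) :
      (0 : ℤ) ≤ ∑ j ∈ Finset.range (r - i), (-1 : ℤ) ^ j * ((Λ - t_a - i).choose j : ℤ) *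
        ((((Λ - t_a - i - j).choose (r - i - j)).choose (t_p + 1)) : ℤ) :=
    alternating_sum_choose_choose_nonneg (by omega) (by omega)
  refine ⟨fun i _ _ => inner_nonneg i, sum_nonneg fun i _ => ?_⟩
  have := inner_nonneg i
  positivity

/-- Nonnegativity of the achievable rate expression and of each inner
inclusion–exclusion sum (Theorem 2 sanity). -/
theorem stmt_16 (Λ r t_a t_p : ℕ) (hΛ : 0 < Λ) (hr : 0 < r) (hta : 0 < t_a)
    (htp : 0 < t_p) (hsum : t_a + r ≤ Λ)
    (hcond : Λ * t_p < (t_a + r) * t_p + r) :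
    (∀ i, 1 ≤ i → i ≤ r - 1 →
      (0 : ℤ) ≤ ∑ j ∈ Finset.range (r - i), (-1 : ℤ) ^ j * ((Λ - t_a - i).choose j : ℤ) *
        ((((Λ - t_a - i - j).choose (r - i - j)).choose (t_p + 1)) : ℤ)) ∧
    (0 : ℚ) ≤ ∑ i ∈ Finset.Icc 1 (r - 1),
      (((Λ - t_a).choose i : ℚ) *
        (((∑ j ∈ Finset.range (r - i), (-1 : ℤ) ^ j * ((Λ - t_a - i).choose j : ℤ) *
          ((((Λ - t_a - i - j).choose (r - i - j)).choose (t_p + 1)) : ℤ)) : ℤ) : ℚ)) /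
        ((((Λ - t_a).choose r).choose t_p : ℚ) * ((t_a + i).choose t_a : ℚ)) :=
  stmt_16_general Λ r t_a t_p htp hsum
end
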